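/- In the score game on a QBF Q.φ, the universal player has a winning strategy (in variant 2: the universal player wins if φ is falsified or the total score equals 1) if and only if the QBF Q.φ is false. -/

import Mathlib

/-!
If the universal player has a winning score strategy `s`, he wins the evaluation game by always
answering so that the running score avoids `1`: when the existential player would reach score `1`
by setting `u` to `1`, set `u` to `0` instead, which moves the score from `S ≠ 1` to `2S - 1 ≠ 1`.
The final score is then not `1`, so `φ` is falsified.

Conversely, from an evaluation-game strategy `τ` he announces `∓2^c` at the `c`-th universal
variable, signed so that obeying `τ` costs him `2^c`, and `0` once the existential player has
deviated from `τ`. While she obeys, the score is `1 - 2^c`; the first deviation gains him exactly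
`2^c` and fixes the score at `1` for the rest of the play.
-/

namespace ScoreGame

open Finset

variable {n : ℕ}

def IsNonanticipating {β : Type*} (f : Fin n → (Fin n → Bool) → β) : Prop :=
  ∀ u : Fin n, ∀ α α' : Fin n → Bool, (∀ v, v < u → α v = α' v) → f u α = f u α'

def signOf (b : Bool) : ℚ := 2 * (if b then 1 else 0) - 1

@[simp] lemma signOf_true : signOf true = 1 := by norm_num [signOf]

@[simp] lemma signOf_false : signOf false = -1 := by norm_num [signOf]

lemma signOf_mul_signOf (a b : Bool) : signOf a * signOf b = if a = b then 1 else -1 := by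
  cases a <;> cases b <;> norm_num

lemma add_mul_signOf_decide_ne_one {S x : ℚ} (hS : S ≠ 1) :
    S + x * signOf (decide (S + x ≠ 1)) ≠ 1 := by
  by_cases h : S + x = 1
  · simp only [h, ne_eq, not_true_eq_false, decide_false, signOf_false]
    intro h'
    exact hS (by linarith)
  · simp [h]

section Follows

variable {E : Fin n → Prop} (τ : Fin n → (Fin n → Bool) → Bool) (α : Fin n → Bool)

variable (E) in
def Follows (k : ℕ) : Prop :=
  ∀ u : Fin n, u.val < k → ¬ E u → α u = τ u α

lemma follows_zero : Follows E τ α 0 := fun _ h => absurd h (Nat.not_lt_zero _)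

lemma follows_succ {k : ℕ} (hk : k < n) :
    Follows E τ α (k + 1) ↔
      Follows E τ α k ∧ (¬ E ⟨k, hk⟩ → α ⟨k, hk⟩ = τ ⟨k, hk⟩ α) := by
  refine ⟨fun H => ⟨fun v hv => H v (Nat.lt_succ_of_lt hv), H _ (Nat.lt_succ_self k)⟩, ?_⟩
  rintro ⟨H, Hk⟩ v hv
  rcases Nat.lt_succ_iff_lt_or_eq.mp hv with hv | hv
  · exact H v hv
  · obtain rfl : v = ⟨k, hk⟩ := Fin.ext hv
    exact Hk

lemma follows_congr {τ} (hτ : IsNonanticipating τ) {α α' : Fin n → Bool} {k : ℕ}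
    (h : ∀ v : Fin n, v.val < k → α v = α' v) :
    Follows E τ α k ↔ Follows E τ α' k := by
  refine forall_congr' fun v => imp_congr_right fun hv => imp_congr_right fun _ => ?_
  rw [h v hv, hτ v α α' fun w hw => h w ((Fin.lt_def.mp hw).trans hv)]

variable [DecidablePred E]

instance (k : ℕ) : Decidable (Follows E τ α k) := by
  unfold Follows
  infer_instance

end Follows

variable (E : Fin n → Prop) [DecidablePred E]

def universalsBelow (k : ℕ) : Finset (Fin n) :=
  univ.filter fun u => ¬ E u ∧ u.val < k

lemma universalsBelow_zero : universalsBelow E 0 = ∅ := by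
  simp [universalsBelow]

lemma universalsBelow_of_le {k : ℕ} (hk : n ≤ k) :
    universalsBelow E k = univ.filter fun u => ¬ E u := by
  ext u
  simp [universalsBelow, u.isLt.trans_le hk]

lemma universalsBelow_succ_of_existential {k : ℕ} (hk : k < n) (h : E ⟨k, hk⟩) :
    universalsBelow E (k + 1) = universalsBelow E k := by
  ext u
  simp only [universalsBelow, mem_filter, mem_univ, true_and, and_congr_right_iff]
  intro hu
  refine ⟨fun hlt => (Nat.lt_succ_iff_lt_or_eq.mp hlt).resolve_right ?_, Nat.lt_succ_of_lt⟩
  rintro rfl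
  exact hu h

lemma universalsBelow_succ_of_universal {k : ℕ} (hk : k < n) (h : ¬ E ⟨k, hk⟩) :
    universalsBelow E (k + 1) = insert ⟨k, hk⟩ (universalsBelow E k) := by
  ext u
  simp only [universalsBelow, mem_filter, mem_univ, true_and, mem_insert]
  constructor
  · rintro ⟨hu, hlt⟩
    rcases Nat.lt_succ_iff_lt_or_eq.mp hlt with hlt | heq
    · exact Or.inr ⟨hu, hlt⟩
    · exact Or.inl (Fin.ext heq)
  · rintro (rfl | ⟨hu, hlt⟩)
    · exact ⟨h, Nat.lt_succ_self k⟩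
    · exact ⟨hu, Nat.lt_succ_of_lt hlt⟩

lemma notMem_universalsBelow_self {k : ℕ} (hk : k < n) :
    (⟨k, hk⟩ : Fin n) ∉ universalsBelow E k := by
  simp [universalsBelow]

def scoreBelow (s : Fin n → (Fin n → Bool) → ℚ) (α : Fin n → Bool) (k : ℕ) : ℚ :=
  ∑ u ∈ universalsBelow E k, s u α * signOf (α u)

variable {E}

section ScoreBelow

variable (s : Fin n → (Fin n → Bool) → ℚ) (α : Fin n → Bool)

lemma scoreBelow_zero : scoreBelow E s α 0 = 0 := by
  simp [scoreBelow, universalsBelow_zero]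

lemma scoreBelow_top :
    scoreBelow E s α n = ∑ u ∈ univ.filter (fun u => ¬ E u), s u α * signOf (α u) := by
  rw [scoreBelow, universalsBelow_of_le E le_rfl]

lemma scoreBelow_succ_of_existential {k : ℕ} (hk : k < n) (h : E ⟨k, hk⟩) :
    scoreBelow E s α (k + 1) = scoreBelow E s α k := by
  rw [scoreBelow, universalsBelow_succ_of_existential E hk h, scoreBelow]

lemma scoreBelow_succ_of_universal {k : ℕ} (hk : k < n) (h : ¬ E ⟨k, hk⟩) :
    scoreBelow E s α (k + 1) = scoreBelow E s α k + s ⟨k, hk⟩ α * signOf (α ⟨k, hk⟩) := by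
  rw [scoreBelow, universalsBelow_succ_of_universal E hk h,
    sum_insert (notMem_universalsBelow_self E hk), scoreBelow, add_comm]

lemma scoreBelow_congr {s} (hs : IsNonanticipating s) {α α' : Fin n → Bool} {k : ℕ}
    (h : ∀ v : Fin n, v.val < k → α v = α' v) :
    scoreBelow E s α k = scoreBelow E s α' k := by
  refine sum_congr rfl fun u hu => ?_
  have huk : u.val < k := (mem_filter.mp hu).2.2
  rw [hs u α α' fun v hv => h v ((Fin.lt_def.mp hv).trans huk), h u huk]

end ScoreBelow

section ScoreToEvaluation

variable (E) in
def avoidOne (s : Fin n → (Fin n → Bool) → ℚ) (u : Fin n) (α : Fin n → Bool) : Bool :=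
  decide (scoreBelow E s α u + s u α ≠ 1)

variable {s : Fin n → (Fin n → Bool) → ℚ}

lemma isNonanticipating_avoidOne (hs : IsNonanticipating s) :
    IsNonanticipating (avoidOne E s) := by
  intro u α α' h
  rw [avoidOne, avoidOne, scoreBelow_congr hs fun v hv => h v hv, hs u α α' h]

lemma scoreBelow_ne_one_of_follows_avoidOne {α : Fin n → Bool}
    (hα : Follows E (avoidOne E s) α n) {k : ℕ} (hk : k ≤ n) :
    scoreBelow E s α k ≠ 1 := by
  induction k with
  | zero => simp [scoreBelow_zero]
  | succ k ih =>
    have hk : k < n := hk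
    by_cases hE : E ⟨k, hk⟩
    · rw [scoreBelow_succ_of_existential s α hk hE]
      exact ih hk.le
    · rw [scoreBelow_succ_of_universal s α hk hE, hα _ hk hE]
      exact add_mul_signOf_decide_ne_one (ih hk.le)

end ScoreToEvaluation

section EvaluationToScore

variable (τ : Fin n → (Fin n → Bool) → Bool) (α : Fin n → Bool)

variable (E) in
def doublingStrategy (u : Fin n) (α : Fin n → Bool) : ℚ :=
  if Follows E τ α u then -signOf (τ u α) * 2 ^ (universalsBelow E u).card else 0

lemma isNonanticipating_doublingStrategy {τ} (hτ : IsNonanticipating τ) :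
    IsNonanticipating (doublingStrategy E τ) := by
  intro u α α' h
  simp only [doublingStrategy, follows_congr hτ fun v hv => h v hv, hτ u α α' h]

lemma doublingStrategy_mul_signOf_of_follows {u : Fin n} (hF : Follows E τ α u) :
    doublingStrategy E τ u α * signOf (α u) =
      if α u = τ u α then -2 ^ (universalsBelow E u).card else 2 ^ (universalsBelow E u).card := by
  rw [doublingStrategy, if_pos hF, show ∀ a b c : ℚ, -a * c * b = -(b * a) * c by intros; ring,
    signOf_mul_signOf]
  split_ifs <;> ring

lemma scoreBelow_doublingStrategy {k : ℕ} (hk : k ≤ n) :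
    scoreBelow E (doublingStrategy E τ) α k =
      if Follows E τ α k then 1 - 2 ^ (universalsBelow E k).card else 1 := by
  induction k with
  | zero => simp [scoreBelow_zero, follows_zero, universalsBelow_zero]
  | succ k ih =>
    have hk : k < n := hk
    simp only [follows_succ τ α hk]
    by_cases hE : E ⟨k, hk⟩
    · simp only [scoreBelow_succ_of_existential _ α hk hE, ih hk.le,
        universalsBelow_succ_of_existential E hk hE, hE, not_true_eq_false, false_imp_iff,
        and_true]
    · have hcard : (universalsBelow E (k + 1)).card = (universalsBelow E k).card + 1 := by
        rw [universalsBelow_succ_of_universal E hk hE,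
          card_insert_of_notMem (notMem_universalsBelow_self E hk)]
      rw [scoreBelow_succ_of_universal _ α hk hE, ih hk.le, hcard]
      by_cases hF : Follows E τ α k
      · rw [doublingStrategy_mul_signOf_of_follows τ α hF]
        by_cases hu : α ⟨k, hk⟩ = τ ⟨k, hk⟩ α
        · simp only [hF, hu, implies_true, and_self, if_true, pow_succ]
          ring
        · simp [hF, hu, hE]
      · simp [doublingStrategy, hF]

end EvaluationToScore

end ScoreGame

open ScoreGame in
theorem stmt_7 (n : ℕ) (E : Fin n → Prop) [DecidablePred E]
    (φ : (Fin n → Bool) → Prop) :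
    (∃ s : Fin n → (Fin n → Bool) → ℚ,
        (∀ u : Fin n, ∀ α α' : Fin n → Bool, (∀ v, v < u → α v = α' v) → s u α = s u α') ∧
        (∀ α : Fin n → Bool, ¬ φ α ∨
          ∑ u ∈ Finset.univ.filter (fun u => ¬ E u),
            s u α * (2 * (if α u then (1 : ℚ) else 0) - 1) = 1))
      ↔
    (∃ τ : Fin n → (Fin n → Bool) → Bool,
        (∀ u : Fin n, ∀ α α' : Fin n → Bool, (∀ v, v < u → α v = α' v) → τ u α = τ u α') ∧
        (∀ α : Fin n → Bool, (∀ u, ¬ E u → α u = τ u α) → ¬ φ α)) := by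
  constructor
  · rintro ⟨s, hs, hwin⟩
    refine ⟨avoidOne E s, isNonanticipating_avoidOne hs, fun α hα => ?_⟩
    have hne : scoreBelow E s α n ≠ 1 :=
      scoreBelow_ne_one_of_follows_avoidOne (fun u _ hu => hα u hu) le_rfl
    exact (hwin α).resolve_right fun h => hne ((scoreBelow_top s α).trans h)
  · rintro ⟨τ, hτ, hwin⟩
    refine ⟨doublingStrategy E τ, isNonanticipating_doublingStrategy hτ, fun α => ?_⟩
    by_cases hF : Follows E τ α n
    · exact Or.inl (hwin α fun u => hF u u.isLt)
    · exact Or.inr <| (scoreBelow_top _ α).symm.trans <|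
        (scoreBelow_doublingStrategy τ α le_rfl).trans (if_neg hF)
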